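/- Let ξ, η ∈ ℝ³ and define the normal vectors of the surface {(ζ, ζ₁ζ₂, ζ₂²+ζ₁ζ₃)} ⊂ ℝ⁵ at ζ by n¹_ζ = (ζ₂, ζ₁, 0, −1, 0) and n²_ζ = (ζ₃, 2ζ₂, ζ₁, 0, −1). Then n¹_ξ, n²_ξ, n¹_η, n²_η are linearly dependent over ℝ if and only if ξ₁ = η₁ and ξ₂ = η₂. -/
import Mathlib


/-- Normal vector n¹ of the surface {(ζ, ζ₁ζ₂, ζ₂²+ζ₁ζ₃)} at ζ. -/
noncomputable def n1c (ζ : Fin 3 → ℝ) : Fin 5 → ℝ := ![ζ 1, ζ 0, 0, -1, 0]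

/-- Normal vector n² of the surface {(ζ, ζ₁ζ₂, ζ₂²+ζ₁ζ₃)} at ζ. -/
noncomputable def n2c (ζ : Fin 3 → ℝ) : Fin 5 → ℝ := ![ζ 2, 2 * ζ 1, ζ 0, 0, -1]

theorem stmt2 (ξ η : Fin 3 → ℝ) :
    (∃ k₁ k₂ l₁ l₂ : ℝ, ¬(k₁ = 0 ∧ k₂ = 0 ∧ l₁ = 0 ∧ l₂ = 0) ∧
      k₁ • n1c ξ + k₂ • n2c ξ + l₁ • n1c η + l₂ • n2c η = 0)
    ↔ (ξ 0 = η 0 ∧ ξ 1 = η 1) := by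
  constructor
  · rintro ⟨k₁, k₂, l₁, l₂, hnt, heq⟩
    have h0 := congrFun heq 0
    have h1 := congrFun heq 1
    have h2 := congrFun heq 2
    have h3 := congrFun heq 3
    have h4 := congrFun heq 4
    simp [n1c, n2c] at h0 h1 h2 h3 h4
    have hl1 : l₁ = -k₁ := by linarith
    have hl2 : l₂ = -k₂ := by linarith
    subst hl1 hl2
    have hk : k₁ ≠ 0 ∨ k₂ ≠ 0 := by
      by_contra h
      push_neg at h
      exact hnt ⟨h.1, h.2, by rw [h.1]; ring, by rw [h.2]; ring⟩
    by_cases hk2 : k₂ = 0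
    · have hk1 : k₁ ≠ 0 := by tauto
      subst hk2
      constructor
      · have : k₁ * (ξ 0 - η 0) = 0 := by linarith
        have := mul_eq_zero.mp this
        rcases this with h | h
        · exact absurd h hk1
        · linarith
      · have : k₁ * (ξ 1 - η 1) = 0 := by linarith
        rcases mul_eq_zero.mp this with h | h
        · exact absurd h hk1
        · linarith
    · have ha : ξ 0 = η 0 := by
        have : k₂ * (ξ 0 - η 0) = 0 := by linarith
        rcases mul_eq_zero.mp this with h | h
        · exact absurd h hk2
        · linarith
      refine ⟨ha, ?_⟩
      have : k₂ * (ξ 1 - η 1) = 0 := by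
        have := h1
        rw [ha] at this
        nlinarith [this]
      rcases mul_eq_zero.mp this with h | h
      · exact absurd h hk2
      · linarith
  · rintro ⟨h0, h1⟩
    refine ⟨1, 0, -1, 0, by norm_num, ?_⟩
    funext i
    fin_cases i <;> simp [n1c, n2c, h0, h1]
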